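/- arXiv:math/0202077 — 5 statements merged into one kernel-verified Lean document; each statement's English description precedes it below -/
import Mathlib

section
/- For every nonnegative integer k, 2^(2k) = Σ_{p+q=k} C(2p,p) · C(2q,q), where the sum is over nonnegative integers p, q with p+q = k. -/
/-! Let `S k = ∑_{p+q=k} c_p c_q` with `c_n = C(2n, n)`. Weighting each term by `p` and using the
symmetry `p ↔ q` gives `2 ∑ p c_p c_q = k S k`; shifting `p ↦ p + 1` with
`(p+1) c_{p+1} = 2(2p+1) c_p` expresses the weighted sum at `k + 1` through the sums at `k`.
Together they give `(k+1) S (k+1) = 4 (k+1) S k`, so `S k = 4 ^ k`. -/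

open Finset Nat

theorem Finset.Nat.two_mul_sum_antidiagonal_fst_mul {R : Type*} [CommSemiring R] (f : ℕ → R)
    (k : ℕ) :
    2 * ∑ pq ∈ antidiagonal k, (pq.1 : R) * (f pq.1 * f pq.2) =
      k * ∑ pq ∈ antidiagonal k, f pq.1 * f pq.2 := by
  rw [two_mul]
  nth_rewrite 2 [← Finset.Nat.sum_antidiagonal_swap]
  rw [← sum_add_distrib, mul_sum]
  refine sum_congr rfl fun pq hpq => ?_
  rw [← mem_antidiagonal.mp hpq, Prod.fst_swap, Prod.snd_swap, cast_add]
  ring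

theorem Nat.sum_antidiagonal_succ_fst_mul_centralBinom_mul (k : ℕ) :
    ∑ pq ∈ antidiagonal (k + 1), pq.1 * (centralBinom pq.1 * centralBinom pq.2) =
      4 * ∑ pq ∈ antidiagonal k, pq.1 * (centralBinom pq.1 * centralBinom pq.2) +
        2 * ∑ pq ∈ antidiagonal k, centralBinom pq.1 * centralBinom pq.2 := by
  rw [Finset.Nat.sum_antidiagonal_succ, zero_mul, zero_add, mul_sum, mul_sum, ← sum_add_distrib]
  refine sum_congr rfl fun pq _ => ?_
  rw [← mul_assoc, succ_mul_centralBinom_succ]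
  ring

theorem Nat.sum_antidiagonal_centralBinom_mul_centralBinom (k : ℕ) :
    ∑ pq ∈ antidiagonal k, centralBinom pq.1 * centralBinom pq.2 = 4 ^ k := by
  induction k with
  | zero => simp
  | succ k ih =>
    have weighted (n : ℕ) :
        2 * ∑ pq ∈ antidiagonal n, pq.1 * (centralBinom pq.1 * centralBinom pq.2) =
          n * ∑ pq ∈ antidiagonal n, centralBinom pq.1 * centralBinom pq.2 := by
      simpa using Finset.Nat.two_mul_sum_antidiagonal_fst_mul centralBinom n
    refine Nat.eq_of_mul_eq_mul_left k.succ_pos ?_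
    calc (k + 1) * ∑ pq ∈ antidiagonal (k + 1), centralBinom pq.1 * centralBinom pq.2
        = 4 * (2 * ∑ pq ∈ antidiagonal k, pq.1 * (centralBinom pq.1 * centralBinom pq.2)) +
            4 * ∑ pq ∈ antidiagonal k, centralBinom pq.1 * centralBinom pq.2 := by
          rw [← weighted, sum_antidiagonal_succ_fst_mul_centralBinom_mul]
          ring
      _ = (k + 1) * 4 ^ (k + 1) := by
          rw [weighted, ih]
          ring

theorem stmt0 (k : ℕ) :
    2 ^ (2 * k) = ∑ pq ∈ Finset.HasAntidiagonal.antidiagonal k,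
      Nat.choose (2 * pq.1) pq.1 * Nat.choose (2 * pq.2) pq.2 := by
  rw [pow_mul]
  exact (sum_antidiagonal_centralBinom_mul_centralBinom k).symm
end

section
/- For all positive integers k and n, the volume (Lebesgue measure) of the set V_{k,n} = {(x_0, x_1, …, x_{nk}) ∈ ℝ^{nk+1} : 0 < x_0 < x_1 < ⋯ < x_{nk}, and x_{jk} < j for each j = 1, …, n} equals n^{nk} / (nk+1)!. -/
/-!
Put `N = nk + 1` and let `E ⊆ [0, n)^N` be the set of points having, for each `j = 1, …, n`, more
than `jk` coordinates below `j`. The set `E` is invariant under permuting coordinates, and up to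
the null set `{x₀ = 0}` its strictly increasing points are exactly `V_{k,n}`; hence
`vol E = N! · vol V_{k,n}`.

Rotating all coordinates of a point of the cube by the same `c ∈ {0, …, n - 1}` modulo `n`
preserves volume. Whether the rotated point lies in `E` is read off the walk
`m ↦ #{i | xᵢ < m} - km`, which gains `N - nk = 1` over each period `n`: the rotation by `c` lies
in `E` iff `c` is a strict record of the walk over the next `n` steps. By the cycle lemma exactly
one `c` is such a record, so `n^N = vol [0, n)^N = n · vol E`, and `vol V_{k,n} = n^{nk} / N!`.
-/

open Nat MeasureTheory Set
open scoped ENNReal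

theorem measure_univ_eq_card_mul_of_existsUnique {α ι : Type*} [MeasurableSpace α] [Fintype ι]
    {μ : Measure α} {f : ι → α → α} (hf : ∀ i, MeasurePreserving (f i) μ μ)
    {s : Set α} (hs : MeasurableSet s) (h : ∀ᵐ x ∂μ, ∃! i, f i x ∈ s) :
    μ univ = Fintype.card ι * μ s := by
  have hsum : (fun x => ∑ i, (f i ⁻¹' s).indicator 1 x) =ᵐ[μ] fun _ => (1 : ℝ≥0∞) := by
    filter_upwards [h] with x ⟨i₀, hi₀, huniq⟩
    refine (Fintype.sum_eq_single i₀ fun i hi => ?_).trans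
      (indicator_of_mem (show x ∈ f i₀ ⁻¹' s from hi₀) 1)
    exact indicator_of_notMem (show x ∉ f i ⁻¹' s from mt (huniq i) hi) 1
  calc μ univ = ∫⁻ x, ∑ i, (f i ⁻¹' s).indicator 1 x ∂μ := by
        rw [lintegral_congr_ae hsum, lintegral_const, one_mul]
    _ = ∑ i, μ (f i ⁻¹' s) := by
        rw [lintegral_finsetSum _ fun i _ => measurable_one.indicator ((hf i).measurable hs)]
        simp only [lintegral_indicator_one ((hf _).measurable hs)]
    _ = Fintype.card ι * μ s := by
        simp [fun i => (hf i).measure_preimage hs.nullMeasurableSet]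

theorem ae_injective {ι : Type*} [Fintype ι] : ∀ᵐ x : ι → ℝ, Function.Injective x := by
  classical
  -- each diagonal `{x | x i = x j}` is a proper linear subspace
  have hdiag : ∀ i j : ι, ∀ᵐ x : ι → ℝ, i ≠ j → x i ≠ x j := fun i j => by
    by_cases hij : i = j
    · exact .of_forall fun _ h => (h hij).elim
    have hker : LinearMap.ker ((LinearMap.proj i : (ι → ℝ) →ₗ[ℝ] ℝ) - LinearMap.proj j) ≠ ⊤ :=
      fun h => by
        simpa [Pi.single_apply, Ne.symm hij] using
          LinearMap.congr_fun (LinearMap.ker_eq_top.mp h) (Pi.single i 1)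
    refine measure_mono_null (fun x hx => ?_) (Measure.addHaar_submodule volume _ hker)
    simp_all [sub_eq_zero]
  filter_upwards [ae_all_iff.mpr fun i => ae_all_iff.mpr (hdiag i)] with x hx i j hxij
  by_contra hij
  exact hx i j hij hxij

theorem measurePreserving_comp_perm {ι β : Type*} [Fintype ι] [MeasureSpace β]
    [SigmaFinite (volume : Measure β)] (σ : Equiv.Perm ι) :
    MeasurePreserving (fun x : ι → β => x ∘ σ) :=
  volume_preserving_arrowCongr' σ.symm (MeasurableEquiv.refl β) (MeasurePreserving.id volume)

theorem measurableSet_setOf_strictMono {ι : Type*} [Preorder ι] [Countable ι] :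
    MeasurableSet {x : ι → ℝ | StrictMono x} := by
  simp only [StrictMono, ofPred_forall]
  exact .iInter fun i => .iInter fun j => .iInter fun _ =>
    measurableSet_lt (measurable_pi_apply i) (measurable_pi_apply j)

theorem existsUnique_strictMono_comp_perm {α : Type*} [LinearOrder α] {N : ℕ} {x : Fin N → α}
    (hx : Function.Injective x) :
    ∃! σ : Equiv.Perm (Fin N), StrictMono (x ∘ σ) := by
  refine ⟨Tuple.sort x, (Tuple.monotone_sort x).strictMono_of_injective
    (hx.comp (Tuple.sort x).injective), fun τ hτ => ?_⟩
  have h := Tuple.unique_monotone hτ.monotone (Tuple.monotone_sort x)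
  ext i
  exact congrArg Fin.val (hx (congrFun h i))

theorem volume_eq_factorial_mul_volume_inter_strictMono {N : ℕ} {S : Set (Fin N → ℝ)}
    (hS : MeasurableSet S) (hSσ : ∀ σ : Equiv.Perm (Fin N), (fun x => x ∘ σ) ⁻¹' S = S) :
    volume S = N ! * volume (S ∩ {x | StrictMono x}) := by
  have h := measure_univ_eq_card_mul_of_existsUnique (μ := volume.restrict S)
    (fun σ => by simpa only [hSσ] using (measurePreserving_comp_perm σ).restrict_preimage hS)
    measurableSet_setOf_strictMono
    (ae_restrict_of_ae (ae_injective.mono fun x => existsUnique_strictMono_comp_perm))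
  rwa [Measure.restrict_apply_univ, Measure.restrict_apply measurableSet_setOf_strictMono,
    Fintype.card_perm, Fintype.card_fin, inter_comm] at h

section CountLT

variable {ι : Type*} [Fintype ι]

noncomputable def countLT (x : ι → ℝ) (t : ℝ) : ℕ := (Finset.univ.filter fun i => x i < t).card

theorem measurable_countLT (t : ℝ) : Measurable fun x : ι → ℝ => countLT x t := by
  simp only [countLT, Finset.card_filter]
  exact Finset.measurable_sum _ fun i _ =>
    Measurable.ite (measurableSet_lt (measurable_pi_apply i) measurable_const)
      measurable_const measurable_const

theorem countLT_comp_equiv {ι' : Type*} [Fintype ι'] (σ : ι' ≃ ι) (x : ι → ℝ) (t : ℝ) :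
    countLT (x ∘ σ) t = countLT x t :=
  Finset.card_equiv σ (by simp)

theorem countLT_eq_zero {x : ι → ℝ} {t : ℝ} (h : ∀ i, t ≤ x i) : countLT x t = 0 := by
  simpa [countLT] using h

theorem countLT_eq_card {x : ι → ℝ} {t : ℝ} (h : ∀ i, x i < t) :
    countLT x t = Fintype.card ι := by
  simp [countLT, h]

theorem StrictMono.lt_countLT_iff {N : ℕ} {x : Fin N → ℝ} (hx : StrictMono x) (i : Fin N)
    (t : ℝ) : (i : ℕ) < countLT x t ↔ x i < t := by
  constructor
  · refine fun h => not_le.mp fun hti => h.not_ge ?_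
    calc countLT x t ≤ (Finset.Iio i).card := Finset.card_le_card fun j hj =>
          Finset.mem_Iio.mpr (hx.lt_iff_lt.mp ((by simpa using hj : x j < t).trans_le hti))
      _ = i := Fin.card_Iio i
  · intro hit
    calc (i : ℕ) < (Finset.Iic i).card := by rw [Fin.card_Iic]; omega
      _ ≤ countLT x t := Finset.card_le_card fun j hj => by
          simpa [countLT] using (hx.monotone (Finset.mem_Iic.mp hj)).trans_lt hit

end CountLT

noncomputable def rotateIco (T c t : ℝ) : ℝ := if t < c then t - c + T else t - c

theorem measurable_rotateIco (T c : ℝ) : Measurable (rotateIco T c) :=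
  Measurable.ite (measurableSet_lt measurable_id measurable_const)
    ((measurable_id.sub_const _).add_const _) (measurable_id.sub_const _)

theorem rotateIco_mem_Ico {T c t : ℝ} (hc₀ : 0 ≤ c) (hcT : c ≤ T) (ht : t ∈ Ico 0 T) :
    rotateIco T c t ∈ Ico 0 T := by
  obtain ⟨ht₀, htT⟩ := ht
  unfold rotateIco
  split_ifs with h <;> constructor <;> linarith

theorem measurePreserving_rotateIco {T c : ℝ} (hc₀ : 0 ≤ c) (hcT : c ≤ T) :
    MeasurePreserving (rotateIco T c) (volume.restrict (Ico 0 T)) (volume.restrict (Ico 0 T)) := by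
  refine ⟨measurable_rotateIco T c, Measure.ext fun A hA => ?_⟩
  rw [Measure.map_apply (measurable_rotateIco T c) hA,
    Measure.restrict_apply (measurable_rotateIco T c hA), Measure.restrict_apply hA]
  -- `[0, c)` is translated onto `[T - c, T)` and `[c, T)` onto `[0, T - c)`.
  have hsplit : rotateIco T c ⁻¹' A ∩ Ico 0 T =
      (fun t => t + (T - c)) ⁻¹' (A ∩ Ico (T - c) T) ∪
        (fun t => t + -c) ⁻¹' (A ∩ Ico 0 (T - c)) := by
    ext t
    simp only [rotateIco, mem_inter_iff, mem_preimage, mem_Ico, mem_union]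
    split_ifs with h
    · rw [show t - c + T = t + (T - c) by ring]
      constructor
      · rintro ⟨hA, ht₀, -⟩; exact Or.inl ⟨hA, by linarith, by linarith⟩
      · rintro (⟨hA, h₁, -⟩ | ⟨-, h₁, -⟩)
        · exact ⟨hA, by linarith, by linarith⟩
        · linarith
    · rw [← sub_eq_add_neg]
      constructor
      · rintro ⟨hA, -, htT⟩; exact Or.inr ⟨hA, by linarith, by linarith⟩
      · rintro (⟨-, -, h₁⟩ | ⟨hA, h₁, h₂⟩)
        · linarith
        · exact ⟨hA, by linarith, by linarith⟩
  have hdisj : Disjoint (A ∩ Ico 0 (T - c)) (A ∩ Ico (T - c) T) :=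
    Ico_disjoint_Ico_same.mono inter_subset_right inter_subset_right
  have hdisj' : Disjoint ((fun t => t + (T - c)) ⁻¹' (A ∩ Ico (T - c) T))
      ((fun t => t + -c) ⁻¹' (A ∩ Ico 0 (T - c))) := by
    rw [disjoint_iff_inter_eq_empty]
    ext t
    simp only [mem_inter_iff, mem_preimage, mem_Ico, mem_empty_iff_false, iff_false]
    intro h
    linarith [h.1.2.2, h.2.2.1]
  rw [hsplit, measure_union hdisj' ((measurable_add_const _) (hA.inter measurableSet_Ico)),
    measure_preimage_add_right, measure_preimage_add_right, add_comm,
    ← measure_union hdisj (hA.inter measurableSet_Ico), ← inter_union_distrib_left,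
    Ico_union_Ico_eq_Ico (by linarith) (by linarith)]

theorem measurePreserving_comp_rotateIco {ι : Type*} [Fintype ι] {T c : ℝ} (hc₀ : 0 ≤ c)
    (hcT : c ≤ T) :
    MeasurePreserving (fun x : ι → ℝ => rotateIco T c ∘ x)
      (volume.restrict (univ.pi fun _ => Ico 0 T))
      (volume.restrict (univ.pi fun _ => Ico 0 T)) := by
  rw [volume_pi, Measure.restrict_pi_pi]
  exact measurePreserving_pi _ _ fun _ => measurePreserving_rotateIco hc₀ hcT

theorem countLT_comp_rotateIco_add {ι : Type*} [Fintype ι] {T j : ℝ} (hj₀ : 0 ≤ j) (hjT : j ≤ T)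
    (c : ℝ) (x : ι → ℝ) :
    countLT (rotateIco T c ∘ x) j + countLT x c = countLT x (c + j - T) + countLT x (c + j) := by
  simp only [countLT, Finset.card_filter, ← Finset.sum_add_distrib]
  refine Finset.sum_congr rfl fun i _ => ?_
  simp only [Function.comp_apply, rotateIco]
  split_ifs <;> first | rfl | (exfalso; linarith)

theorem cycle_lemma {n : ℕ} (hn : 0 < n) {s : ℕ → ℤ} (hs : ∀ t < n, s (t + n) = s t + 1) :
    ∃! r : Fin n, ∀ j, 1 ≤ j → j ≤ n → s r < s (r + j) := by
  have hper : ∀ t, n ≤ t → t < 2 * n → s t = s (t - n) + 1 := fun t h₁ h₂ => by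
    rw [← hs (t - n) (by omega), Nat.sub_add_cancel h₁]
  -- records cannot be closer than `n`, yet `s` grows by only `1` over a period
  have hsep : ∀ a b : ℕ, a < b → b < n → (∀ j, 1 ≤ j → j ≤ n → s a < s (a + j)) →
      (∀ j, 1 ≤ j → j ≤ n → s b < s (b + j)) → False := fun a b hab hbn ha hb => by
    have h₁ := ha (b - a) (by omega) (by omega)
    have h₂ := hb (a + n - b) (by omega) (by omega)
    rw [Nat.add_sub_cancel' hab.le] at h₁
    rw [Nat.add_sub_cancel' (by omega), hs a (by omega)] at h₂
    omega
  -- the record is the last minimiser of `s` on `[0, n)`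
  obtain ⟨m, hm, hmin⟩ := Finset.exists_min_image (Finset.range n) s ⟨0, Finset.mem_range.mpr hn⟩
  obtain ⟨r, hr, hlast⟩ := Finset.exists_max_image ((Finset.range n).filter fun t => s t = s m) id
    ⟨m, Finset.mem_filter.mpr ⟨hm, rfl⟩⟩
  simp only [Finset.mem_filter, Finset.mem_range, id] at hr hmin hlast
  have hrec : ∀ j, 1 ≤ j → j ≤ n → s r < s (r + j) := fun j hj₁ hjn => by
    by_cases h : r + j < n
    · refine lt_of_le_of_ne (hr.2.symm ▸ hmin _ h) fun he => ?_
      have := hlast (r + j) ⟨h, he.symm.trans hr.2⟩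
      omega
    · rw [hper (r + j) (by omega) (by omega)]
      have := hmin (r + j - n) (by omega)
      omega
  refine ⟨⟨r, hr.1⟩, hrec, fun r' hr' => ?_⟩
  rcases lt_trichotomy (r' : ℕ) r with h | h | h
  · exact (hsep _ _ h hr.1 hr' hrec).elim
  · exact Fin.ext h
  · exact (hsep _ _ h r'.2 hrec hr').elim

section Parking

def parkingRegion (ι : Type*) [Fintype ι] (n k : ℕ) : Set (ι → ℝ) :=
  (univ.pi fun _ => Ico 0 (n : ℝ)) ∩ {x | ∀ j : ℕ, 1 ≤ j → j ≤ n → j * k < countLT x j}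

/-- For `x ∈ [0, n)^ι` and `m < 2n`, the first two terms count the points of `x + nℕ` below `m`. -/
noncomputable def parkingWalk {ι : Type*} [Fintype ι] (x : ι → ℝ) (n k m : ℕ) : ℤ :=
  countLT x (m - n) + countLT x m - k * m

variable {ι : Type*} [Fintype ι] {n k : ℕ}

theorem parkingRegion_subset_pi : parkingRegion ι n k ⊆ univ.pi fun _ => Ico 0 (n : ℝ) :=
  inter_subset_left

theorem measurableSet_parkingRegion : MeasurableSet (parkingRegion ι n k) := by
  refine (MeasurableSet.univ_pi fun _ => measurableSet_Ico).inter ?_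
  simp only [ofPred_forall]
  exact .iInter fun j => .iInter fun _ => .iInter fun _ =>
    measurable_countLT (j : ℝ) measurableSet_Ioi

theorem preimage_comp_equiv_parkingRegion (σ : ι ≃ ι) :
    (fun x => x ∘ σ) ⁻¹' parkingRegion ι n k = parkingRegion ι n k := by
  ext x
  simp only [parkingRegion, mem_preimage, mem_inter_iff, mem_pi, mem_univ, true_implies,
    mem_ofPred_eq, Function.comp_apply, countLT_comp_equiv]
  rw [σ.surjective.forall (p := fun i => x i ∈ Ico 0 (n : ℝ))]

theorem parkingWalk_add_self {x : ι → ℝ} (hx : x ∈ univ.pi fun _ => Ico 0 (n : ℝ))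
    (hcard : Fintype.card ι = n * k + 1) {m : ℕ} (hm : m ≤ n) :
    parkingWalk x n k (m + n) = parkingWalk x n k m + 1 := by
  have hmn : (m : ℝ) ≤ n := by exact_mod_cast hm
  have hlow : countLT x ((m : ℝ) - n) = 0 := countLT_eq_zero fun i => by
    linarith [(hx i (mem_univ i)).1]
  have hhigh : countLT x ((m : ℝ) + n) = n * k + 1 := hcard ▸ countLT_eq_card fun i => by
    linarith [(hx i (mem_univ i)).2, (Nat.cast_nonneg m : (0 : ℝ) ≤ m)]
  simp only [parkingWalk, hlow, hhigh, Nat.cast_add, add_sub_cancel_right]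
  push_cast
  ring

theorem rotateIco_comp_mem_parkingRegion_iff {x : ι → ℝ}
    (hx : x ∈ univ.pi fun _ => Ico 0 (n : ℝ)) {c : ℕ} (hc : c ≤ n) :
    rotateIco n c ∘ x ∈ parkingRegion ι n k ↔
      ∀ j, 1 ≤ j → j ≤ n → parkingWalk x n k c < parkingWalk x n k (c + j) := by
  have hcn : (c : ℝ) ≤ n := by exact_mod_cast hc
  have hrot : rotateIco n c ∘ x ∈ univ.pi fun _ => Ico 0 (n : ℝ) := fun i _ =>
    rotateIco_mem_Ico (Nat.cast_nonneg c) hcn (hx i (mem_univ i))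
  have hlow : countLT x ((c : ℝ) - n) = 0 := countLT_eq_zero fun i => by
    linarith [(hx i (mem_univ i)).1]
  simp only [parkingRegion, mem_inter_iff, hrot, true_and, mem_ofPred_eq]
  refine forall_congr' fun j => imp_congr_right fun _ => forall_congr' fun hjn => ?_
  have hsum : (countLT (rotateIco n c ∘ x) j + countLT x c : ℤ) =
      countLT x (c + j - n) + countLT x (c + j) := by
    exact_mod_cast
      countLT_comp_rotateIco_add (T := n) (Nat.cast_nonneg j) (by exact_mod_cast hjn) c x
  simp only [parkingWalk, hlow, Nat.cast_add]
  zify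
  constructor <;> intro h <;> linarith

theorem existsUnique_rotateIco_comp_mem_parkingRegion (hn : 0 < n)
    (hcard : Fintype.card ι = n * k + 1) {x : ι → ℝ}
    (hx : x ∈ univ.pi fun _ => Ico 0 (n : ℝ)) :
    ∃! c : Fin n, rotateIco n c ∘ x ∈ parkingRegion ι n k :=
  (existsUnique_congr fun c => rotateIco_comp_mem_parkingRegion_iff hx c.2.le).mpr
    (cycle_lemma hn fun _ hm => parkingWalk_add_self hx hcard hm.le)

theorem volume_pi_Ico_eq_mul_volume_parkingRegion (hn : 0 < n)
    (hcard : Fintype.card ι = n * k + 1) :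
    volume (univ.pi fun _ : ι => Ico 0 (n : ℝ)) = n * volume (parkingRegion ι n k) := by
  have hcube : MeasurableSet (univ.pi fun _ : ι => Ico 0 (n : ℝ)) :=
    .univ_pi fun _ => measurableSet_Ico
  have h := measure_univ_eq_card_mul_of_existsUnique
    (μ := volume.restrict (univ.pi fun _ : ι => Ico 0 (n : ℝ)))
    (f := fun (c : Fin n) x => rotateIco n c ∘ x)
    (fun c => measurePreserving_comp_rotateIco (Nat.cast_nonneg _) (by exact_mod_cast c.2.le))
    measurableSet_parkingRegion
    ((ae_restrict_mem hcube).mono fun x hx =>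
      existsUnique_rotateIco_comp_mem_parkingRegion hn hcard hx)
  rwa [Measure.restrict_apply_univ, Measure.restrict_apply measurableSet_parkingRegion,
    inter_eq_left.mpr parkingRegion_subset_pi, Fintype.card_fin] at h

end Parking

theorem volume_inter_setOf_pos {ι : Type*} [Fintype ι] {A : Set (ι → ℝ)} (i : ι)
    (hA : ∀ x ∈ A, 0 ≤ x i) : volume (A ∩ {x | 0 < x i}) = volume A :=
  measure_congr <| (Measure.ae_eval_ne _ i 0).mono fun x hx =>
    propext ⟨fun h => h.1, fun h => ⟨h, (hA x h).lt_of_ne' hx⟩⟩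

theorem setOf_eq_parkingRegion_inter {n k : ℕ} (hn : 0 < n) :
    {x : Fin (n * k + 1) → ℝ |
        0 < x ⟨0, Nat.succ_pos _⟩ ∧
        (∀ i j : Fin (n * k + 1), i < j → x i < x j) ∧
        (∀ i : Fin (n * k + 1), ∀ j : ℕ, 1 ≤ j → j ≤ n → (i : ℕ) = j * k → x i < j)} =
      parkingRegion (Fin (n * k + 1)) n k ∩ {x | StrictMono x} ∩ {x | 0 < x 0} := by
  ext x
  simp only [parkingRegion, mem_inter_iff, mem_ofPred_eq, mem_univ_pi, mem_Ico]
  constructor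
  · rintro ⟨hpos, hmono, hbound⟩
    have hmono : StrictMono x := fun i j h => hmono i j h
    have hlast := hbound ⟨n * k, by omega⟩ n hn le_rfl rfl
    refine ⟨⟨⟨fun i => ⟨?_, ?_⟩, fun j hj₁ hjn => ?_⟩, hmono⟩, hpos⟩
    · exact hpos.le.trans (hmono.monotone (Fin.zero_le i))
    · exact (hmono.monotone (Fin.mk_le_mk.mpr (by omega) : i ≤ ⟨n * k, by omega⟩)).trans_lt hlast
    · have hjk : j * k < n * k + 1 := Nat.lt_succ_of_le (Nat.mul_le_mul_right k hjn)
      exact (hmono.lt_countLT_iff ⟨j * k, hjk⟩ j).mpr (hbound _ j hj₁ hjn rfl)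
  · rintro ⟨⟨⟨-, hcount⟩, hmono⟩, hpos⟩
    refine ⟨hpos, fun i j h => hmono h, fun i j hj₁ hjn hi => ?_⟩
    exact (hmono.lt_countLT_iff i j).mp (hi ▸ hcount j hj₁ hjn)

theorem stmt6_general (n k : ℕ) (hn : 0 < n) :
    volume {x : Fin (n * k + 1) → ℝ |
        0 < x ⟨0, Nat.succ_pos _⟩ ∧
        (∀ i j : Fin (n * k + 1), i < j → x i < x j) ∧
        (∀ i : Fin (n * k + 1), ∀ j : ℕ, 1 ≤ j → j ≤ n → (i : ℕ) = j * k → x i < j)} =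
      ENNReal.ofReal ((n : ℝ) ^ (n * k) / ((n * k + 1)! : ℝ)) := by
  set N := n * k + 1
  set E := parkingRegion (Fin N) n k
  have hcube : volume (univ.pi fun _ : Fin N => Ico 0 (n : ℝ)) = n ^ N := by
    simp [volume_pi_pi, Real.volume_Ico]
  have hE : (n : ℝ≥0∞) ^ (n * k) * n = n * (N ! * volume (E ∩ {x | StrictMono x})) := by
    rw [← pow_succ, hcube.symm, volume_pi_Ico_eq_mul_volume_parkingRegion hn (Fintype.card_fin _),
      volume_eq_factorial_mul_volume_inter_strictMono measurableSet_parkingRegion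
        preimage_comp_equiv_parkingRegion]
  rw [mul_comm, ENNReal.mul_right_inj (by exact_mod_cast hn.ne') (ENNReal.natCast_ne_top n)] at hE
  rw [setOf_eq_parkingRegion_inter hn,
    volume_inter_setOf_pos 0 fun x hx => (parkingRegion_subset_pi hx.1 0 (mem_univ 0)).1,
    ENNReal.ofReal_div_of_pos (by positivity), ENNReal.ofReal_pow (Nat.cast_nonneg _),
    ENNReal.ofReal_natCast, ENNReal.ofReal_natCast,
    ENNReal.eq_div_iff (by exact_mod_cast N.factorial_ne_zero) (ENNReal.natCast_ne_top _), hE]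

theorem stmt6 (n k : ℕ) (hn : 0 < n) (hk : 0 < k) :
    volume {x : Fin (n * k + 1) → ℝ |
        0 < x ⟨0, Nat.succ_pos _⟩ ∧
        (∀ i j : Fin (n * k + 1), i < j → x i < x j) ∧
        (∀ i : Fin (n * k + 1), ∀ j : ℕ, 1 ≤ j → j ≤ n → (i : ℕ) = j * k → x i < j)} =
      ENNReal.ofReal ((n : ℝ) ^ (n * k) / ((n * k + 1)! : ℝ)) :=
  stmt6_general n k hn
end

section
/- For positive integers k, n and real x < 1, define the iterated-integral sequence Q_n by Q_0(x) = 1 and Q_n(x) = ∫_x^1 ∫_{x_1}^1 ⋯ ∫_{x_{k-1}}^1 Q_{n-1}(x_k − 1) dx_k ⋯ dx_1. Then Q_n(x) equals the volume of the set {(x_1,…,x_{nk}) ∈ ℝ^{nk} : x < x_1 < ⋯ < x_{nk} and x_{jk} < j for j = 1,…,n}. -/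
/-!
Peeling off the smallest coordinate writes the volume of the increasing tuples above `x` that
obey coordinatewise upper bounds as an integral over `x < t < b₀` of the same volume for the
shorter tuples above `t`. The first `k` bounds are all `1`, so `k` peelings produce exactly the
`k`-fold iterated integral `∫_x^1 ⋯`, and what remains, shifted down by `1`, is the region
for `n - 1` blocks above `x_k - 1`, whose volume is `Q_{n-1}(x_k - 1)` by induction on `n`.
-/

open Nat MeasureTheory

/-- `iterInt g j x` is the `j`-fold iterated integral
`∫_x^1 ∫_{x₁}^1 ⋯ ∫_{x_{j-1}}^1 g(x_j) dx_j ⋯ dx₁`. -/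
noncomputable def iterInt (g : ℝ → ℝ) : ℕ → ℝ → ℝ
  | 0, x => g x
  | (j + 1), x => ∫ t in x..1, iterInt g j t

open Set

def orderedTuples (N : ℕ) (x : ℝ) (b : ℕ → ℝ) : Set (Fin N → ℝ) :=
  {y | StrictMono y ∧ (∀ i, x < y i) ∧ ∀ i, y i < b i}

section orderedTuples

variable {N : ℕ} {x : ℝ} {b : ℕ → ℝ}

lemma orderedTuples_subset_pi : orderedTuples N x b ⊆ univ.pi fun i => Ioo x (b i) :=
  fun _ hy i _ => ⟨hy.2.1 i, hy.2.2 i⟩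

lemma volume_orderedTuples_lt_top : volume (orderedTuples N x b) < ⊤ := by
  refine (measure_mono orderedTuples_subset_pi).trans_lt ?_
  rw [volume_pi_pi]
  exact ENNReal.prod_lt_top fun i _ => by simp

lemma antitone_volume_orderedTuples (N : ℕ) (b : ℕ → ℝ) :
    Antitone fun x => volume (orderedTuples N x b) :=
  fun _ _ hx => measure_mono fun _ hy => ⟨hy.1, fun i => hx.trans_lt (hy.2.1 i), hy.2.2⟩

lemma volume_orderedTuples_zero : volume (orderedTuples 0 x b) = 1 := by
  have : orderedTuples 0 x b = univ :=
    eq_univ_of_forall fun _ => ⟨fun i => i.elim0, fun i => i.elim0, fun i => i.elim0⟩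
  rw [this, volume_pi, Measure.pi_empty_univ]

lemma cons_mem_orderedTuples_succ {t : ℝ} {y : Fin N → ℝ} :
    Fin.cons t y ∈ orderedTuples (N + 1) x b ↔
      t ∈ Ioo x (b 0) ∧ y ∈ orderedTuples N t (fun i => b (i + 1)) := by
  simp only [orderedTuples, mem_ofPred_eq, Fin.strictMono_cons, Fin.forall_fin_succ,
    Fin.cons_zero, Fin.cons_succ, Fin.val_zero, Fin.val_succ, mem_Ioo]
  constructor
  · rintro ⟨⟨hty, hy⟩, ⟨hxt, -⟩, ⟨htb, hyb⟩⟩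
    exact ⟨⟨hxt, htb⟩, hy, hty, hyb⟩
  · rintro ⟨⟨hxt, htb⟩, hy, hty, hyb⟩
    exact ⟨⟨hty, hy⟩, ⟨hxt, fun i => hxt.trans (hty i)⟩, ⟨htb, hyb⟩⟩

lemma volume_orderedTuples_succ :
    volume (orderedTuples (N + 1) x b) =
      ∫⁻ t in Ioo x (b 0), volume (orderedTuples N t (fun i => b (i + 1))) := by
  set T : Set (ℝ × (Fin N → ℝ)) :=
    {p | p.1 ∈ Ioo x (b 0) ∧ p.2 ∈ orderedTuples N p.1 (fun i => b (i + 1))}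
  have hT : MeasurableSet T := by
    refine measurableSet_setOfPred.2 ?_
    simp only [orderedTuples, StrictMono, mem_ofPred_eq, mem_Ioo]
    fun_prop
  have hpre : orderedTuples (N + 1) x b =
      MeasurableEquiv.piFinSuccAbove (fun _ => ℝ) 0 ⁻¹' T := by
    ext y
    rw [← Fin.cons_self_tail y, cons_mem_orderedTuples_succ]
    simp [T, MeasurableEquiv.piFinSuccAbove_apply]
  rw [hpre, (volume_preserving_piFinSuccAbove (fun _ => ℝ) 0).measure_preimage
    hT.nullMeasurableSet, Measure.volume_eq_prod, Measure.prod_apply hT,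
    ← lintegral_indicator measurableSet_Ioo]
  refine lintegral_congr fun t => ?_
  rw [indicator_apply]
  split_ifs with ht
  · simp only [T, preimage, mem_ofPred_eq, ht, true_and, ofPred_mem_eq]
  · simp only [T, preimage, mem_ofPred_eq, ht, false_and, ofPred_false, measure_empty]

lemma volume_orderedTuples_add_const (c : ℝ) :
    volume (orderedTuples N x (fun i => b i + c)) = volume (orderedTuples N (x - c) b) := by
  have : orderedTuples N x (fun i => b i + c) =
      (· + fun _ => -c) ⁻¹' orderedTuples N (x - c) b := by
    ext y
    simp [orderedTuples, StrictMono, ← sub_eq_add_neg, sub_lt_iff_lt_add]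
  rw [this, measure_preimage_add_right]

end orderedTuples

lemma iterInt_congr {g h : ℝ → ℝ} (hgh : ∀ y ≤ 1, g y = h y) :
    ∀ (j : ℕ) {x : ℝ}, x ≤ 1 → iterInt g j x = iterInt h j x
  | 0, _, hx => hgh _ hx
  | j + 1, x, hx => intervalIntegral.integral_congr fun t ht => by
      rw [uIcc_of_le hx] at ht
      exact iterInt_congr hgh j ht.2

lemma toReal_volume_orderedTuples_eq_iterInt (j N : ℕ) {b : ℕ → ℝ} (hb : ∀ i < j, b i = 1)
    {x : ℝ} (hx : x ≤ 1) :
    (volume (orderedTuples (j + N) x b)).toReal =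
      iterInt (fun t => (volume (orderedTuples N t fun i => b (i + j))).toReal) j x := by
  induction j generalizing b x with
  | zero => rw [Nat.zero_add]; rfl
  | succ j ih =>
    rw [Nat.add_right_comm, volume_orderedTuples_succ, hb 0 j.succ_pos,
      ← integral_toReal (antitone_volume_orderedTuples _ _).measurable.aemeasurable
        (.of_forall fun _ => volume_orderedTuples_lt_top),
      iterInt, intervalIntegral.integral_of_le hx, integral_Ioc_eq_integral_Ioo]
    refine setIntegral_congr_fun measurableSet_Ioo fun t ht => ?_
    exact ih (fun i hi => hb (i + 1) (by omega)) ht.2.le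

/-- For an increasing tuple, the constraints `x_{jk} < j` (one per block of `k` coordinates)
are equivalent to `y i < stepBound k i` for every index `i` (counted from `0`). -/
def stepBound (k i : ℕ) : ℝ := (i / k : ℕ) + 1

lemma stepBound_of_lt {k i : ℕ} (hi : i < k) : stepBound k i = 1 := by
  simp [stepBound, Nat.div_eq_of_lt hi]

lemma stepBound_add_self {k : ℕ} (hk : 0 < k) (i : ℕ) :
    stepBound k (i + k) = stepBound k i + 1 := by
  simp [stepBound, Nat.add_div_right i hk]

lemma stepBound_of_succ_eq_mul {k i j : ℕ} (hk : 0 < k) (hij : i + 1 = j * k) :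
    stepBound k i = j := by
  obtain _ | j := j
  · simp at hij
  rw [Nat.succ_mul] at hij
  have hdiv : i / k = j := Nat.div_eq_of_lt_le (by omega) (by rw [Nat.succ_mul]; omega)
  simp [stepBound, hdiv]

lemma forall_lt_stepBound_iff {n k : ℕ} (hk : 0 < k) {y : Fin (n * k) → ℝ} (hy : Monotone y) :
    (∀ i : Fin (n * k), ∀ j : ℕ, 1 ≤ j → j ≤ n → (i : ℕ) + 1 = j * k → y i < j) ↔
      ∀ i, y i < stepBound k i := by
  refine ⟨fun h i => ?_, fun h i j _ _ hij => stepBound_of_succ_eq_mul hk hij ▸ h i⟩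
  obtain ⟨q, hq⟩ : ∃ q, (i : ℕ) / k = q := ⟨_, rfl⟩
  have hi : (i : ℕ) < (q + 1) * k := by rw [Nat.succ_mul, ← hq]; exact Nat.lt_div_mul_add hk
  have hqn : q < n := hq ▸ (Nat.div_lt_iff_lt_mul hk).2 i.isLt
  have hlast : (q + 1) * k - 1 < n * k := by
    have : (q + 1) * k ≤ n * k := Nat.mul_le_mul_right k hqn
    omega
  calc y i ≤ y ⟨(q + 1) * k - 1, hlast⟩ := hy (Fin.mk_le_mk.2 (by omega))
    _ < (q + 1 : ℕ) := h _ (q + 1) q.succ_pos hqn (by dsimp only; omega)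
    _ = stepBound k i := by simp [stepBound, hq]

lemma forall_val_eq_zero_lt_iff {N : ℕ} {x : ℝ} {y : Fin N → ℝ} (hy : Monotone y) :
    (∀ i : Fin N, (i : ℕ) = 0 → x < y i) ↔ ∀ i, x < y i :=
  ⟨fun h i => (h ⟨0, i.pos⟩ rfl).trans_le (hy (Fin.mk_le_mk.2 (Nat.zero_le _))),
    fun h i _ => h i⟩

lemma eq_toReal_volume_orderedTuples {k : ℕ} (hk : 0 < k) {Q : ℕ → ℝ → ℝ}
    (hQ0 : ∀ x : ℝ, Q 0 x = 1)
    (hQ : ∀ m : ℕ, 1 ≤ m → ∀ x : ℝ, Q m x = iterInt (fun y => Q (m - 1) (y - 1)) k x)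
    (m : ℕ) {x : ℝ} (hx : x ≤ 1) :
    Q m x = (volume (orderedTuples (m * k) x (stepBound k))).toReal := by
  induction m generalizing x with
  | zero => rw [hQ0, Nat.zero_mul, volume_orderedTuples_zero, ENNReal.toReal_one]
  | succ m ih =>
    have hshift (t : ℝ) : (volume (orderedTuples (m * k) (t - 1) (stepBound k))).toReal =
        (volume (orderedTuples (m * k) t fun i => stepBound k (i + k))).toReal := by
      simp only [stepBound_add_self hk, volume_orderedTuples_add_const]
    rw [hQ (m + 1) (Nat.le_add_left 1 m), Nat.add_sub_cancel,
      iterInt_congr (fun y hy => ih (by linarith)) k hx, funext hshift, Nat.succ_mul,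
      Nat.add_comm, toReal_volume_orderedTuples_eq_iterInt k _ (fun i => stepBound_of_lt) hx]

theorem stmt9_general (k n : ℕ) (hk : 0 < k) (Q : ℕ → ℝ → ℝ)
    (hQ0 : ∀ x : ℝ, Q 0 x = 1)
    (hQ : ∀ m : ℕ, 1 ≤ m → ∀ x : ℝ, Q m x = iterInt (fun y => Q (m - 1) (y - 1)) k x)
    (x : ℝ) (hx : x < 1) :
    Q n x = (volume {y : Fin (n * k) → ℝ |
        (∀ i j : Fin (n * k), i < j → y i < y j) ∧
        (∀ i : Fin (n * k), (i : ℕ) = 0 → x < y i) ∧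
        (∀ i : Fin (n * k), ∀ j : ℕ, 1 ≤ j → j ≤ n → (i : ℕ) + 1 = j * k →
          y i < j)}).toReal := by
  rw [eq_toReal_volume_orderedTuples hk hQ0 hQ n hx.le]
  congr 2
  ext y
  exact and_congr_right fun hy => (and_congr (forall_val_eq_zero_lt_iff hy.monotone)
    (forall_lt_stepBound_iff hk hy.monotone)).symm

theorem stmt9 (k n : ℕ) (hk : 0 < k) (hn : 0 < n) (Q : ℕ → ℝ → ℝ)
    (hQ0 : ∀ x : ℝ, Q 0 x = 1)
    (hQ : ∀ m : ℕ, 1 ≤ m → ∀ x : ℝ, Q m x = iterInt (fun y => Q (m - 1) (y - 1)) k x)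
    (x : ℝ) (hx : x < 1) :
    Q n x = (volume {y : Fin (n * k) → ℝ |
        (∀ i j : Fin (n * k), i < j → y i < y j) ∧
        (∀ i : Fin (n * k), (i : ℕ) = 0 → x < y i) ∧
        (∀ i : Fin (n * k), ∀ j : ℕ, 1 ≤ j → j ≤ n → (i : ℕ) + 1 = j * k →
          y i < j)}).toReal :=
  stmt9_general k n hk Q hQ0 hQ x hx
end

section
/- The number of noncrossing pair partitions of the sequence of 2nk symbols formed by the block T^k (T*)^k repeated n times, such that every pair connects a T with a T*, is, for n = 2, equal to k+1. -/
/-- A pairing of `{0,…,N-1}` encoded as a fixed-point-free involution `f`;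
it is noncrossing when there are no `a < b < f a < f b`. -/
def IsNoncrossingPairing {N : ℕ} (f : Fin N → Fin N) : Prop :=
  Function.Involutive f ∧ (∀ a, f a ≠ a) ∧
    ∀ a b : Fin N, a < b → b < f a → f a < f b → False

/-- In the word `T^k (T^*)^k T^k (T^*)^k`, position `i` carries a `T`
iff `i % (2k) < k`. -/
def isTpos (k : ℕ) (i : Fin (4 * k)) : Prop := (i : ℕ) % (2 * k) < k


def Fn (k q i : ℕ) : ℕ :=
  if i < q then 4*k-1-i
  else if i < 2*k-q then 2*k-1-i
  else if i < 2*k+q then 4*k-1-i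
  else if i < 4*k-q then 6*k-1-i
  else 4*k-1-i

lemma classify {k : ℕ} (hk : 0 < k) (fv : ℕ → ℕ)
    (hlt : ∀ i, i < 4*k → fv i < 4*k)
    (hinv : ∀ i, i < 4*k → fv (fv i) = i)
    (hne : ∀ i, i < 4*k → fv i ≠ i)
    (hnc : ∀ a b, a < 4*k → b < 4*k → a < b → b < fv a → fv a < fv b → False)
    (htn : ∀ i, i < 4*k →
      ((i < k ∨ (2*k ≤ i ∧ i < 3*k)) ↔ ¬ (fv i < k ∨ (2*k ≤ fv i ∧ fv i < 3*k)))) :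
    ∃ q ≤ k, ∀ i, i < 4*k → fv i = Fn k q i := by
  -- interval closure
  have hcl : ∀ a x, a < 4*k → x < 4*k → a < x → x < fv a → a < fv x ∧ fv x < fv a := by
    intro a x ha hx hax hxfa
    have hfa := hlt a ha
    have hfx := hlt x hx
    have h1 : fv x ≠ x := hne x hx
    have h2 : fv x ≠ fv a := by
      intro h
      have e1 := hinv a ha
      have e2 := hinv x hx
      rw [h] at e2; omega
    have h3 : fv x ≠ a := by
      intro h
      have e2 := hinv x hx
      rw [h] at e2; omega
    rcases lt_or_ge (fv x) a with h4 | h4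
    · exact absurd (hnc (fv x) a hfx ha h4 (by rw [hinv x hx]; omega)
        (by rw [hinv x hx]; omega)) not_false
    · rcases lt_or_ge (fv x) (fv a) with h5 | h5
      · exact ⟨by omega, h5⟩
      · exact absurd (hnc a x ha hx hax hxfa (by omega)) not_false
  -- counting lemma
  have hcount : ∀ a, a < 4*k → a < fv a →
      ((Finset.Ioo a (fv a)).filter (fun x => x < k ∨ (2*k ≤ x ∧ x < 3*k))).card
    = ((Finset.Ioo a (fv a)).filter (fun x => ¬ (x < k ∨ (2*k ≤ x ∧ x < 3*k)))).card := by
    intro a ha hafa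
    have hfa := hlt a ha
    apply Finset.card_bij' (i := fun x _ => fv x) (j := fun x _ => fv x)
    · intro x hx
      simp only [Finset.mem_filter, Finset.mem_Ioo] at hx ⊢
      obtain ⟨⟨hx1, hx2⟩, hx3⟩ := hx
      have hxlt : x < 4*k := by omega
      have hc := hcl a x ha hxlt hx1 hx2
      have ht := (htn x hxlt).mp hx3
      exact ⟨⟨hc.1, hc.2⟩, ht⟩
    · intro x hx
      simp only [Finset.mem_filter, Finset.mem_Ioo] at hx ⊢
      obtain ⟨⟨hx1, hx2⟩, hx3⟩ := hx
      have hxlt : x < 4*k := by omega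
      have hc := hcl a x ha hxlt hx1 hx2
      refine ⟨⟨hc.1, hc.2⟩, ?_⟩
      by_contra hcon
      exact hx3 ((htn x hxlt).mpr hcon)
    · intro x hx
      simp only [Finset.mem_filter, Finset.mem_Ioo] at hx
      exact hinv x (by omega)
    · intro x hx
      simp only [Finset.mem_filter, Finset.mem_Ioo] at hx
      exact hinv x (by omega)
  -- arc sum lemma (for a < fv a)
  have hsum0 : ∀ a, a < 4*k → a < fv a →
      a + fv a = 2*k-1 ∨ a + fv a = 4*k-1 ∨ a + fv a = 6*k-1 := by
    intro a ha hafa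
    have hfa := hlt a ha
    have ht := htn a ha
    have hc := hcount a ha hafa
    set b := fv a with hb
    -- four configurations
    rcases (by omega : a < k ∨ (k ≤ a ∧ a < 2*k) ∨ (2*k ≤ a ∧ a < 3*k) ∨ 3*k ≤ a)
      with hA | hB | hC | hD
    · -- a in A; b in B or D
      have hbt : ¬ (b < k ∨ (2*k ≤ b ∧ b < 3*k)) := ht.mp (by omega)
      rcases (by omega : (k ≤ b ∧ b < 2*k) ∨ 3*k ≤ b) with hAB | hAD
      · -- A-B arc
        have e1 : (Finset.Ioo a b).filter (fun x => x < k ∨ (2*k ≤ x ∧ x < 3*k))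
            = Finset.Ioo a k := by
          ext x
          simp only [Finset.mem_filter, Finset.mem_Ioo]
          omega
        have e2 : (Finset.Ioo a b).filter (fun x => ¬ (x < k ∨ (2*k ≤ x ∧ x < 3*k)))
            = Finset.Ico k b := by
          ext x
          simp only [Finset.mem_filter, Finset.mem_Ico, Finset.mem_Ioo]
          omega
        rw [e1, e2, Nat.card_Ioo, Nat.card_Ico] at hc
        omega
      · -- A-D arc
        have e1 : (Finset.Ioo a b).filter (fun x => x < k ∨ (2*k ≤ x ∧ x < 3*k))
            = Finset.Ioo a k ∪ Finset.Ico (2*k) (3*k) := by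
          ext x
          simp only [Finset.mem_filter, Finset.mem_union, Finset.mem_Ioo, Finset.mem_Ico]
          omega
        have e2 : (Finset.Ioo a b).filter (fun x => ¬ (x < k ∨ (2*k ≤ x ∧ x < 3*k)))
            = Finset.Ico k (2*k) ∪ Finset.Ico (3*k) b := by
          ext x
          simp only [Finset.mem_filter, Finset.mem_union, Finset.mem_Ioo, Finset.mem_Ico]
          omega
        have d1 : Disjoint (Finset.Ioo a k) (Finset.Ico (2*k) (3*k)) := by
          rw [Finset.disjoint_left]
          intro x h1 h2
          simp only [Finset.mem_Ioo, Finset.mem_Ico] at h1 h2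
          omega
        have d2 : Disjoint (Finset.Ico k (2*k)) (Finset.Ico (3*k) b) := by
          rw [Finset.disjoint_left]
          intro x h1 h2
          simp only [Finset.mem_Ico] at h1 h2
          omega
        rw [e1, e2, Finset.card_union_of_disjoint d1, Finset.card_union_of_disjoint d2,
          Nat.card_Ioo, Nat.card_Ico, Nat.card_Ico, Nat.card_Ico] at hc
        omega
    · -- a in B; b in C
      have hbt : b < k ∨ (2*k ≤ b ∧ b < 3*k) := by
        by_contra hcon
        have := ht.mpr hcon
        omega
      have hBC : 2*k ≤ b ∧ b < 3*k := by omega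
      have e1 : (Finset.Ioo a b).filter (fun x => x < k ∨ (2*k ≤ x ∧ x < 3*k))
          = Finset.Ico (2*k) b := by
        ext x
        simp only [Finset.mem_filter, Finset.mem_Ico, Finset.mem_Ioo]
        omega
      have e2 : (Finset.Ioo a b).filter (fun x => ¬ (x < k ∨ (2*k ≤ x ∧ x < 3*k)))
          = Finset.Ioo a (2*k) := by
        ext x
        simp only [Finset.mem_filter, Finset.mem_Ioo]
        omega
      rw [e1, e2, Nat.card_Ico, Nat.card_Ioo] at hc
      omega
    · -- a in C; b in D
      have hbt : ¬ (b < k ∨ (2*k ≤ b ∧ b < 3*k)) := ht.mp (by omega)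
      have hCD : 3*k ≤ b := by omega
      have e1 : (Finset.Ioo a b).filter (fun x => x < k ∨ (2*k ≤ x ∧ x < 3*k))
          = Finset.Ioo a (3*k) := by
        ext x
        simp only [Finset.mem_filter, Finset.mem_Ioo]
        omega
      have e2 : (Finset.Ioo a b).filter (fun x => ¬ (x < k ∨ (2*k ≤ x ∧ x < 3*k)))
          = Finset.Ico (3*k) b := by
        ext x
        simp only [Finset.mem_filter, Finset.mem_Ico, Finset.mem_Ioo]
        omega
      rw [e1, e2, Nat.card_Ioo, Nat.card_Ico] at hc
      omega
    · -- a in D: impossible since b > a is a T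
      have hbt : b < k ∨ (2*k ≤ b ∧ b < 3*k) := by
        by_contra hcon
        have := ht.mpr hcon
        omega
      omega
  have hsum : ∀ a, a < 4*k →
      a + fv a = 2*k-1 ∨ a + fv a = 4*k-1 ∨ a + fv a = 6*k-1 := by
    intro a ha
    rcases (by omega : a < fv a ∨ fv a < a ∨ fv a = a) with h | h | h
    · exact hsum0 a ha h
    · have hfa := hlt a ha
      have := hsum0 (fv a) hfa (by rw [hinv a ha]; omega)
      rw [hinv a ha] at this
      omega
    · exact absurd h (hne a ha)
  -- the two thresholds
  obtain ⟨q, hqk, hql, hqh⟩ :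
      ∃ q, q ≤ k ∧ (∀ a, a < q → a < k → 3*k ≤ fv a) ∧ (q < k → fv q < 3*k) := by
    have hex : ∃ a, a = k ∨ (a < k ∧ fv a < 3*k) := ⟨k, Or.inl rfl⟩
    refine ⟨Nat.find hex, Nat.find_le (Or.inl rfl), ?_, ?_⟩
    · intro a ha hak
      have := Nat.find_min hex ha
      omega
    · intro hlt
      have := Nat.find_spec hex
      omega
  have hA1 : ∀ a, a < q → fv a = 4*k-1-a := by
    intro a haq
    have ha : a < 4*k := by omega
    have hfa := hlt a ha
    have h3 : 3*k ≤ fv a := hql a haq (by omega)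
    have := hsum a ha
    omega
  have hA2 : ∀ a, q ≤ a → a < k → fv a = 2*k-1-a := by
    intro a hqa hak
    have hqk' : q < k := by omega
    have hfvq : fv q < 3*k := hqh hqk'
    have hq4 : q < 4*k := by omega
    have hfvq2 : fv q = 2*k-1-q := by
      have := hsum q hq4
      have := hlt q hq4
      have ht := (htn q hq4).mp (by omega)
      omega
    rcases (by omega : a = q ∨ q < a) with h | h
    · subst h; omega
    · have ha : a < 4*k := by omega
      have hfa := hlt a ha
      have ht := (htn a ha).mp (by omega)
      have hs := hsum a ha
      have : ¬ (fv a = 4*k-1-a) := by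
        intro hD
        exact hnc q a hq4 ha h (by omega) (by omega)
      omega
  obtain ⟨q', hq'k, hq'l, hq'h⟩ :
      ∃ q', q' ≤ k ∧ (∀ c, c < q' → c < k → fv (2*k+c) < 3*k) ∧
        (q' < k → 3*k ≤ fv (2*k+q')) := by
    have hex : ∃ c, c = k ∨ (c < k ∧ 3*k ≤ fv (2*k+c)) := ⟨k, Or.inl rfl⟩
    refine ⟨Nat.find hex, Nat.find_le (Or.inl rfl), ?_, ?_⟩
    · intro c hc hck
      have := Nat.find_min hex hc
      omega
    · intro hlt
      have := Nat.find_spec hex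
      omega
  have hC1 : ∀ c, c < q' → fv (2*k+c) = 2*k-1-c := by
    intro c hcq
    have hc4 : 2*k+c < 4*k := by omega
    have hfc := hlt _ hc4
    have h3 : fv (2*k+c) < 3*k := hq'l c hcq (by omega)
    have ht := (htn _ hc4).mp (by omega)
    have := hsum _ hc4
    omega
  have hC2 : ∀ c, q' ≤ c → c < k → fv (2*k+c) = 4*k-1-c := by
    intro c hqc hck
    have hq'k' : q' < k := by omega
    have hq4 : 2*k+q' < 4*k := by omega
    have hfvq : 3*k ≤ fv (2*k+q') := hq'h hq'k'
    have hfvq2 : fv (2*k+q') = 4*k-1-q' := by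
      have := hsum _ hq4
      have := hlt _ hq4
      omega
    rcases (by omega : c = q' ∨ q' < c) with h | h
    · subst h; omega
    · have hc4 : 2*k+c < 4*k := by omega
      have hfc := hlt _ hc4
      have ht := (htn _ hc4).mp (by omega)
      have hs := hsum _ hc4
      have : ¬ (fv (2*k+c) = 2*k-1-c) := by
        intro hB
        have hb4 : 2*k-1-c < 4*k := by omega
        have hbinv : fv (2*k-1-c) = 2*k+c := by
          have := hinv _ hc4
          rw [hB] at this
          exact this
        exact hnc (2*k-1-c) (2*k+q') hb4 hq4 (by omega) (by omega) (by omega)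
      omega
  -- q = q'
  have hqq' : q = q' := by
    rcases (by omega : q = q' ∨ q' < q ∨ q < q') with h | h | h
    · exact h
    · exfalso
      have hq'k2 : q' < k := by omega
      have e1 : fv q' = 4*k-1-q' := hA1 q' h
      have e2 : fv (2*k+q') = 4*k-1-q' := hC2 q' le_rfl hq'k2
      have i1 := hinv q' (by omega)
      have i2 := hinv (2*k+q') (by omega)
      rw [e1] at i1
      rw [e2] at i2
      omega
    · exfalso
      have hqk2 : q < k := by omega
      have e1 : fv q = 2*k-1-q := hA2 q le_rfl hqk2
      have e2 : fv (2*k+q) = 2*k-1-q := hC1 q h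
      have i1 := hinv q (by omega)
      have i2 := hinv (2*k+q) (by omega)
      rw [e1] at i1
      rw [e2] at i2
      omega
  -- conclude
  refine ⟨q, hqk, ?_⟩
  intro j hj
  have hval : fv j = Fn k q j := by
    have h8 : j < q ∨ (q ≤ j ∧ j < k) ∨ (k ≤ j ∧ j < 2*k-q) ∨ (2*k-q ≤ j ∧ j < 2*k) ∨
        (2*k ≤ j ∧ j < 2*k+q) ∨ (2*k+q ≤ j ∧ j < 3*k) ∨ (3*k ≤ j ∧ j < 4*k-q) ∨
        (4*k-q ≤ j) := by omega
    rcases h8 with h | h | h | h | h | h | h | h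
    · have := hA1 j h
      unfold Fn; split_ifs <;> omega
    · have := hA2 j h.1 h.2
      unfold Fn; split_ifs <;> omega
    · -- j = fv a for a = 2k-1-j ∈ [q,k)
      have h1 := hA2 (2*k-1-j) (by omega) (by omega)
      have h2 := hinv (2*k-1-j) (by omega)
      rw [h1] at h2
      have h3 : 2*k-1-(2*k-1-j) = j := by omega
      rw [h3] at h2
      unfold Fn; split_ifs <;> omega
    · -- j = fv (2k+c) for c = 2k-1-j ∈ [0,q)
      have h1 := hC1 (2*k-1-j) (by omega)
      have h2 := hinv (2*k+(2*k-1-j)) (by omega)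
      rw [h1] at h2
      have h3 : 2*k-1-(2*k-1-j) = j := by omega
      rw [h3] at h2
      unfold Fn; split_ifs <;> omega
    · have h1 := hC1 (j-2*k) (by omega)
      have h3 : 2*k+(j-2*k) = j := by omega
      rw [h3] at h1
      unfold Fn; split_ifs <;> omega
    · have h1 := hC2 (j-2*k) (by omega) (by omega)
      have h3 : 2*k+(j-2*k) = j := by omega
      rw [h3] at h1
      unfold Fn; split_ifs <;> omega
    · -- j = fv (2k+c) for c = 4k-1-j ∈ [q,k)
      have h1 := hC2 (4*k-1-j) (by omega) (by omega)
      have h2 := hinv (2*k+(4*k-1-j)) (by omega)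
      rw [h1] at h2
      have h3 : 4*k-1-(4*k-1-j) = j := by omega
      rw [h3] at h2
      unfold Fn; split_ifs <;> omega
    · -- j = fv a for a = 4k-1-j ∈ [0,q)
      have h1 := hA1 (4*k-1-j) (by omega)
      have h2 := hinv (4*k-1-j) (by omega)
      rw [h1] at h2
      have h3 : 4*k-1-(4*k-1-j) = j := by omega
      rw [h3] at h2
      unfold Fn; split_ifs <;> omega
  exact hval

lemma Fn_lt {k q i : ℕ} (hk : 0 < k) (hq : q ≤ k) (hi : i < 4*k) : Fn k q i < 4*k := by
  unfold Fn; split_ifs <;> omega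

lemma Fn_inv {k q i : ℕ} (hk : 0 < k) (hq : q ≤ k) (hi : i < 4*k) :
    Fn k q (Fn k q i) = i := by
  unfold Fn; split_ifs <;> omega

lemma Fn_ne {k q i : ℕ} (hk : 0 < k) (hq : q ≤ k) (hi : i < 4*k) : Fn k q i ≠ i := by
  unfold Fn; split_ifs <;> omega

lemma modlem {k j : ℕ} (hk : 0 < k) (hj : j < 4*k) :
    (j % (2*k) < k) ↔ (j < k ∨ (2*k ≤ j ∧ j < 3*k)) := by
  rcases lt_or_ge j (2*k) with h | h
  · rw [Nat.mod_eq_of_lt h]; omega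
  · rw [Nat.mod_eq_sub_mod h, Nat.mod_eq_of_lt (by omega)]; omega

lemma Fn_type {k q i : ℕ} (hk : 0 < k) (hq : q ≤ k) (hi : i < 4*k) :
    (i % (2*k) < k) ↔ ¬ (Fn k q i % (2*k) < k) := by
  rw [modlem hk hi, modlem hk (Fn_lt hk hq hi)]
  unfold Fn; split_ifs <;> omega

lemma Fn_nc {k q : ℕ} (hk : 0 < k) (hq : q ≤ k) :
    ∀ a b, a < 4*k → b < 4*k → a < b → b < Fn k q a → Fn k q a < Fn k q b → False := by
  intro a b ha hb hab h1 h2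
  unfold Fn at h1 h2; split_ifs at h1 h2 <;> omega

/-- the threshold pairing as a function on `Fin (4*k)` -/
def Ff (k q : ℕ) : Fin (4*k) → Fin (4*k) :=
  fun i => ⟨Fn k q i.val % (4*k), Nat.mod_lt _ i.pos⟩

lemma Ff_val {k q : ℕ} (hq : q ≤ k) (i : Fin (4*k)) :
    ((Ff k q i : Fin (4*k)) : ℕ) = Fn k q i.val := by
  have hk : 0 < k := by have := i.pos; omega
  simp only [Ff]
  exact Nat.mod_eq_of_lt (Fn_lt hk hq i.isLt)

lemma Ff_prop (k q : ℕ) (hq : q ≤ k) :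
    IsNoncrossingPairing (Ff k q) ∧ ∀ i, isTpos k i ↔ ¬ isTpos k (Ff k q i) := by
  constructor
  · refine ⟨?_, ?_, ?_⟩
    · intro i
      have hk : 0 < k := by have := i.pos; omega
      apply Fin.ext
      rw [Ff_val hq, Ff_val hq]
      exact Fn_inv hk hq i.isLt
    · intro a h
      have hk : 0 < k := by have := a.pos; omega
      have := congrArg Fin.val h
      rw [Ff_val hq] at this
      exact Fn_ne hk hq a.isLt this
    · intro a b hab h1 h2
      have hk : 0 < k := by have := a.pos; omega
      rw [Fin.lt_def] at hab h1 h2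
      rw [Ff_val hq] at h1 h2
      rw [Ff_val hq] at h2
      exact Fn_nc hk hq a.val b.val a.isLt b.isLt hab h1 h2
  · intro i
    have hk : 0 < k := by have := i.pos; omega
    show ((i : ℕ) % (2*k) < k) ↔ ¬ (((Ff k q i : Fin (4*k)) : ℕ) % (2*k) < k)
    rw [Ff_val hq]
    exact Fn_type hk hq i.isLt


theorem stmt13 (k : ℕ) :
    Nat.card {f : Fin (4 * k) → Fin (4 * k) //
        IsNoncrossingPairing f ∧ ∀ i, isTpos k i ↔ ¬ isTpos k (f i)} = k + 1 := by
  have h4 : 4 * k = 4*k := rfl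
  have hbij : Function.Bijective (fun q : Fin (k+1) =>
      (⟨Ff k q.val, Ff_prop k q.val (Nat.lt_succ_iff.mp q.isLt)⟩ :
        {f : Fin (4 * k) → Fin (4 * k) //
          IsNoncrossingPairing f ∧ ∀ i, isTpos k i ↔ ¬ isTpos k (f i)})) := by
    constructor
    · intro q1 q2 h
      have hfe : Ff k q1.val = Ff k q2.val := congrArg Subtype.val h
      by_contra hne
      have hvalne : q1.val ≠ q2.val := fun hh => hne (Fin.ext hh)
      have haux : ∀ (qa qb : Fin (k+1)), qa.val < qb.val → Ff k qa.val = Ff k qb.val → False := by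
        intro qa qb hab he
        have hkb := qb.isLt
        have hk : 0 < k := by omega
        have hidx : qa.val < 4*k := by omega
        have hv := congrArg Fin.val (congrFun he ⟨qa.val, hidx⟩)
        rw [Ff_val (show qa.val ≤ k by omega), Ff_val (show qb.val ≤ k by omega)] at hv
        have hv' : Fn k qa.val qa.val = Fn k qb.val qa.val := hv
        unfold Fn at hv'
        split_ifs at hv' <;> omega
      rcases Nat.lt_or_ge q1.val q2.val with hlt | hge
      · exact haux q1 q2 hlt hfe
      · exact haux q2 q1 (by omega) hfe.symm
    · rintro ⟨f, hf⟩
      rcases Nat.eq_zero_or_pos k with hk0 | hk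
      · refine ⟨0, ?_⟩
        apply Subtype.ext
        funext i
        exact absurd i.isLt (by omega)
      · obtain ⟨⟨hInv, hNfp, hNC⟩, hT⟩ := hf
        set fv : ℕ → ℕ := fun i => if h : i < 4*k then ((f ⟨i, h⟩ : Fin (4*k)) : ℕ) else 0
          with hfvdef
        have hm : ∀ (i : ℕ) (h : i < 4*k), fv i = ((f ⟨i, h⟩ : Fin (4*k)) : ℕ) :=
          fun i h => dif_pos h
        have hlt : ∀ i, i < 4*k → fv i < 4*k := by
          intro i h
          rw [hm i h]
          exact (f _).isLt
        have hinv : ∀ i, i < 4*k → fv (fv i) = i := by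
          intro i h
          rw [hm i h, hm _ ((f ⟨i, h⟩).isLt), Fin.eta, hInv ⟨i, h⟩]
        have hne : ∀ i, i < 4*k → fv i ≠ i := by
          intro i h he
          rw [hm i h] at he
          exact hNfp ⟨i, h⟩ (Fin.ext he)
        have hnc : ∀ a b, a < 4*k → b < 4*k → a < b → b < fv a → fv a < fv b → False := by
          intro a b ha hb hab h1 h2
          rw [hm a ha] at h1 h2
          rw [hm b hb] at h2
          exact hNC ⟨a, ha⟩ ⟨b, hb⟩ (Fin.mk_lt_mk.mpr hab) h1 h2
        have htn : ∀ i, i < 4*k →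
            ((i < k ∨ (2*k ≤ i ∧ i < 3*k)) ↔
              ¬ (fv i < k ∨ (2*k ≤ fv i ∧ fv i < 3*k))) := by
          intro i h
          have hti := hT ⟨i, h⟩
          unfold isTpos at hti
          rw [modlem hk h, modlem hk ((f ⟨i, h⟩).isLt)] at hti
          rw [hm i h]
          exact hti
        obtain ⟨q, hqk, hpt⟩ := classify hk fv hlt hinv hne hnc htn
        refine ⟨⟨q, by omega⟩, ?_⟩
        apply Subtype.ext
        funext i
        apply Fin.ext
        rw [Ff_val hqk]
        have h1 := hpt i.val i.isLt
        have h2 : fv i.val = (f i : ℕ) := by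
          rw [hm i.val i.isLt, Fin.eta]
        rw [← h1, h2]
  rw [← Nat.card_eq_of_bijective _ hbij, Nat.card_eq_fintype_card, Fintype.card_fin]
end

section
/- For every positive integer n, Σ_{p+q=n, p,q≥0} (3p)!/(p!)^3 · (3q)!/(q!)^3 ≤ 27^n, i.e. the convolution of central trinomial-type coefficients (3p)!/(p!)^3 is bounded by 27^n. -/
/-!
The ratio of consecutive terms of `(3p)! / (p!)^3` is `3(3p+1)(3p+2)/(p+1)^2`, which is at most
`27 (2p+1)/(2p+3)`; hence `(3p)! / (p!)^3 ≤ 27^p / (2p+1)`. Since `(2p+1)(2q+1) ≥ p+q+1`, each of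
the `n+1` summands is at most `27^n / (n+1)`.
-/

open Nat

theorem two_mul_add_one_mul_factorial_three_mul_le (p : ℕ) :
    (2 * p + 1) * (3 * p)! ≤ 27 ^ p * p ! ^ 3 := by
  induction p with
  | zero => simp
  | succ k ih =>
    have hfac : (3 * (k + 1))! = (3 * k + 3) * (3 * k + 2) * (3 * k + 1) * (3 * k)! := by
      rw [show 3 * (k + 1) = 3 * k + 2 + 1 by ring, factorial_succ, factorial_succ,
        factorial_succ]
      ring
    have hratio : (2 * k + 3) * ((3 * k + 3) * (3 * k + 2) * (3 * k + 1))
        ≤ 27 * (k + 1) ^ 3 * (2 * k + 1) := by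
      nlinarith
    calc (2 * (k + 1) + 1) * (3 * (k + 1))!
        = (2 * k + 3) * ((3 * k + 3) * (3 * k + 2) * (3 * k + 1)) * (3 * k)! := by
          rw [hfac]; ring
      _ ≤ 27 * (k + 1) ^ 3 * (2 * k + 1) * (3 * k)! := Nat.mul_le_mul_right _ hratio
      _ = 27 * (k + 1) ^ 3 * ((2 * k + 1) * (3 * k)!) := by ring
      _ ≤ 27 * (k + 1) ^ 3 * (27 ^ k * k ! ^ 3) := Nat.mul_le_mul_left _ ih
      _ = 27 ^ (k + 1) * (k + 1)! ^ 3 := by rw [factorial_succ]; ring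

theorem factorial_three_mul_div_pow_le (p : ℕ) :
    ((3 * p)! : ℚ) / (p ! : ℚ) ^ 3 ≤ 27 ^ p / (2 * p + 1) := by
  rw [div_le_div_iff₀ (by positivity) (by positivity), mul_comm]
  exact_mod_cast two_mul_add_one_mul_factorial_three_mul_le p

theorem factorial_three_mul_div_pow_mul_le (p q : ℕ) :
    ((3 * p)! : ℚ) / (p ! : ℚ) ^ 3 * (((3 * q)! : ℚ) / (q ! : ℚ) ^ 3)
      ≤ 27 ^ (p + q) / ((p + q : ℕ) + 1) := by
  have hprod : (p + q + 1 : ℚ) ≤ (2 * p + 1) * (2 * q + 1) := by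
    exact_mod_cast (by nlinarith : p + q + 1 ≤ (2 * p + 1) * (2 * q + 1))
  calc ((3 * p)! : ℚ) / (p ! : ℚ) ^ 3 * (((3 * q)! : ℚ) / (q ! : ℚ) ^ 3)
      ≤ 27 ^ p / (2 * p + 1) * (27 ^ q / (2 * q + 1)) :=
        mul_le_mul (factorial_three_mul_div_pow_le p) (factorial_three_mul_div_pow_le q)
          (by positivity) (by positivity)
    _ = 27 ^ (p + q) / ((2 * p + 1) * (2 * q + 1)) := by rw [pow_add, mul_div_mul_comm]
    _ ≤ 27 ^ (p + q) / ((p + q : ℕ) + 1) := by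
      push_cast
      exact div_le_div_of_nonneg_left (by positivity) (by positivity) hprod

theorem stmt18_general (n : ℕ) :
    ∑ p ∈ Finset.range (n + 1),
      ((3 * p)! : ℚ) / ((p ! : ℚ) ^ 3) * (((3 * (n - p))! : ℚ) / (((n - p)! : ℚ) ^ 3))
      ≤ 27 ^ n := by
  have hterm : ∀ p ∈ Finset.range (n + 1),
      ((3 * p)! : ℚ) / ((p ! : ℚ) ^ 3) * (((3 * (n - p))! : ℚ) / (((n - p)! : ℚ) ^ 3))
        ≤ 27 ^ n / (n + 1) := by
    intro p hp
    have hpq : p + (n - p) = n := Nat.add_sub_cancel' (Finset.mem_range_succ_iff.mp hp)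
    simpa only [hpq] using factorial_three_mul_div_pow_mul_le p (n - p)
  calc _ ≤ ∑ _p ∈ Finset.range (n + 1), (27 : ℚ) ^ n / (n + 1) := Finset.sum_le_sum hterm
    _ = 27 ^ n := by
      rw [Finset.sum_const, Finset.card_range, nsmul_eq_mul]
      push_cast
      field_simp

theorem stmt18 (n : ℕ) (hn : 0 < n) :
    ∑ p ∈ Finset.range (n + 1),
      ((3 * p)! : ℚ) / ((p ! : ℚ) ^ 3) * (((3 * (n - p))! : ℚ) / (((n - p)! : ℚ) ^ 3))
      ≤ 27 ^ n :=
  stmt18_general n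
end
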